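/- Sharp Ostrowski-type inequality for the deviation of a value from a mean value: Let a ≤ c < d ≤ b and t ∈ [a,b]. Then for every modulus of continuity ω, every real Banach space E, and every f ∈ H^ω([a,b],E), ‖f(t) − (1/(d−c))∫_c^d f(u) du‖ ≤ (1/(d−c))∫_c^d ω(|s−t|) ds. Moreover, the inequality is sharp: for any unit vector x ∈ E, the function f(s) = ω(|s−t|)·x belongs to H^ω([a,b],E) and turns the inequality into equality. -/

import Mathlib

/-!
Averaging the identity `f t - f u` over `u ∈ [c, d]` writes the deviation of `f t` from the mean
of `f` as the mean of `f t - f u`, whose norm is at most `ω |u - t|`. For sharpness, the triangle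
inequality for `|·|` together with subadditivity and monotonicity of `ω` gives
`|ω (|s' - t|) - ω (|s - t|)| ≤ ω |s' - s|`, and the extremal function vanishes at `t`.
-/

open MeasureTheory Set

/-- A modulus of continuity: `ω 0 = 0`, continuous, non-decreasing and subadditive on `[0, ∞)`. -/
def IsModulus (ω : ℝ → ℝ) : Prop :=
  ω 0 = 0 ∧ ContinuousOn ω (Set.Ici 0) ∧ MonotoneOn ω (Set.Ici 0) ∧
    ∀ s t : ℝ, 0 ≤ s → 0 ≤ t → ω (s + t) ≤ ω s + ω t

/-- The class `H^ω([a,b], E)`. -/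
def HHolder {E : Type*} [NormedAddCommGroup E] (ω : ℝ → ℝ) (a b : ℝ) (f : ℝ → E) : Prop :=
  ∀ s ∈ Set.Icc a b, ∀ t ∈ Set.Icc a b, ‖f t - f s‖ ≤ ω |t - s|

section Average

variable {E : Type*} [NormedAddCommGroup E] [NormedSpace ℝ E] [CompleteSpace E]

theorem sub_smul_integral_eq_smul_integral_sub {f : ℝ → E} {c d : ℝ} (hcd : c ≠ d)
    (hf : IntervalIntegrable f volume c d) (y : E) :
    y - (d - c)⁻¹ • ∫ u in c..d, f u = (d - c)⁻¹ • ∫ u in c..d, (y - f u) := by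
  rw [intervalIntegral.integral_sub intervalIntegrable_const hf, intervalIntegral.integral_const,
    smul_sub, smul_smul, inv_mul_cancel₀ (sub_ne_zero.2 hcd.symm), one_smul]

theorem norm_sub_smul_integral_le {f : ℝ → E} {g : ℝ → ℝ} {c d : ℝ} (hcd : c < d)
    (hf : IntervalIntegrable f volume c d) (hg : IntervalIntegrable g volume c d) {y : E}
    (hfg : ∀ u ∈ Icc c d, ‖y - f u‖ ≤ g u) :
    ‖y - (d - c)⁻¹ • ∫ u in c..d, f u‖ ≤ (d - c)⁻¹ * ∫ u in c..d, g u := by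
  have hpos : 0 < (d - c)⁻¹ := inv_pos.2 (sub_pos.2 hcd)
  rw [sub_smul_integral_eq_smul_integral_sub hcd.ne hf, norm_smul, Real.norm_of_nonneg hpos.le]
  refine mul_le_mul_of_nonneg_left ?_ hpos.le
  exact intervalIntegral.norm_integral_le_of_norm_le hcd.le
    (Filter.Eventually.of_forall fun u hu => hfg u (Ioc_subset_Icc_self hu)) hg

end Average

namespace IsModulus

variable {ω : ℝ → ℝ}

theorem nonneg (hω : IsModulus ω) {s : ℝ} (hs : 0 ≤ s) : 0 ≤ ω s :=
  hω.1 ▸ hω.2.2.1 self_mem_Ici hs hs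

theorem abs_sub_le (hω : IsModulus ω) {p q : ℝ} (hp : 0 ≤ p) (hq : 0 ≤ q) :
    |ω p - ω q| ≤ ω |p - q| := by
  wlog hqp : q ≤ p generalizing p q
  · rw [abs_sub_comm, abs_sub_comm p q]
    exact this hq hp (le_of_not_ge hqp)
  have hsub : ω p ≤ ω q + ω (p - q) := by
    simpa using hω.2.2.2 q (p - q) hq (sub_nonneg.2 hqp)
  have hmono : ω q ≤ ω p := hω.2.2.1 hq hp hqp
  rw [abs_of_nonneg (sub_nonneg.2 hmono), abs_of_nonneg (sub_nonneg.2 hqp)]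
  linarith

theorem abs_sub_comp_abs_sub_le (hω : IsModulus ω) (t s s' : ℝ) :
    |ω (|s' - t|) - ω (|s - t|)| ≤ ω |s' - s| := by
  refine (hω.abs_sub_le (abs_nonneg _) (abs_nonneg _)).trans ?_
  refine hω.2.2.1 (mem_Ici.2 (abs_nonneg _)) (mem_Ici.2 (abs_nonneg _)) ?_
  simpa using abs_abs_sub_abs_le_abs_sub (s' - t) (s - t)

theorem continuous_comp_abs_sub (hω : IsModulus ω) (t : ℝ) : Continuous fun s => ω |s - t| :=
  hω.2.1.comp_continuous (by fun_prop) fun _ => mem_Ici.2 (abs_nonneg _)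

theorem hHolder_comp_abs_sub_smul (hω : IsModulus ω) {E : Type*} [NormedAddCommGroup E]
    [NormedSpace ℝ E] (a b t : ℝ) {x : E} (hx : ‖x‖ ≤ 1) :
    HHolder ω a b fun s => ω |s - t| • x := by
  intro s _ s' _
  rw [← sub_smul, norm_smul, Real.norm_eq_abs]
  calc |ω (|s' - t|) - ω (|s - t|)| * ‖x‖ ≤ |ω (|s' - t|) - ω (|s - t|)| :=
        mul_le_of_le_one_right (abs_nonneg _) hx
    _ ≤ ω |s' - s| := hω.abs_sub_comp_abs_sub_le t s s'

end IsModulus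

theorem HHolder.continuousOn {E : Type*} [NormedAddCommGroup E] {ω : ℝ → ℝ} {a b : ℝ}
    {f : ℝ → E} (hf : HHolder ω a b f) (hω : IsModulus ω) : ContinuousOn f (Icc a b) := by
  intro s₀ hs₀
  rw [ContinuousWithinAt, tendsto_iff_norm_sub_tendsto_zero]
  have hω₀ : Filter.Tendsto (fun s => ω |s - s₀|) (nhdsWithin s₀ (Icc a b)) (nhds 0) := by
    simpa [hω.1] using
      ((hω.continuous_comp_abs_sub s₀).tendsto s₀).mono_left nhdsWithin_le_nhds
  refine squeeze_zero' (Filter.Eventually.of_forall fun _ => norm_nonneg _) ?_ hω₀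
  filter_upwards [self_mem_nhdsWithin] with s hs
  exact hf s₀ hs₀ s hs

/-- Sharp Ostrowski-type inequality: deviation of a value of `f ∈ H^ω([a,b],E)` from its mean
value over `[c,d] ⊆ [a,b]`, together with sharpness. -/
theorem ostrowski_value_mean_sharp
    {E : Type*} [NormedAddCommGroup E] [NormedSpace ℝ E] [CompleteSpace E]
    (a b c d t : ℝ) (hac : a ≤ c) (hcd : c < d) (hdb : d ≤ b) (ht : t ∈ Set.Icc a b)
    (ω : ℝ → ℝ) (hω : IsModulus ω) :
    (∀ f : ℝ → E, HHolder ω a b f →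
        ‖f t - (d - c)⁻¹ • ∫ u in c..d, f u‖ ≤ (d - c)⁻¹ * ∫ s in c..d, ω |s - t|) ∧
      ∀ x : E, ‖x‖ = 1 →
        HHolder ω a b (fun s => ω |s - t| • x) ∧
          ‖(fun s => ω |s - t| • x) t - (d - c)⁻¹ • ∫ u in c..d, ω |u - t| • x‖ =
            (d - c)⁻¹ * ∫ s in c..d, ω |s - t| := by
  have hcd_sub : Icc c d ⊆ Icc a b := Icc_subset_Icc hac hdb
  have hωint : IntervalIntegrable (fun s => ω |s - t|) volume c d :=
    (hω.continuous_comp_abs_sub t).intervalIntegrable c d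
  refine ⟨fun f hf => ?_, fun x hx => ⟨hω.hHolder_comp_abs_sub_smul a b t hx.le, ?_⟩⟩
  · have hfint : IntervalIntegrable f volume c d :=
      ((hf.continuousOn hω).mono hcd_sub).intervalIntegrable_of_Icc hcd.le
    refine norm_sub_smul_integral_le hcd hfint hωint fun u hu => ?_
    simpa only [abs_sub_comm] using hf u (hcd_sub hu) t ht
  · have hmean_nonneg : 0 ≤ (d - c)⁻¹ * ∫ s in c..d, ω |s - t| :=
      mul_nonneg (inv_nonneg.2 (sub_pos.2 hcd).le)
        (intervalIntegral.integral_nonneg hcd.le fun _ _ => hω.nonneg (abs_nonneg _))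
    rw [intervalIntegral.integral_smul_const, smul_smul]
    simp only [sub_self, abs_zero, hω.1, zero_smul, zero_sub, norm_neg, norm_smul, hx, mul_one,
      Real.norm_of_nonneg hmean_nonneg]
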